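/- arXiv:math/0010134 — 3 statements merged into one kernel-verified Lean document; each statement's English description precedes it below -/
import Mathlib

section
/- If x_i = ∑_{j=1}^{n-1} c_{ij} k_j (for i = 1, ..., n) is a general integer solution of the homogeneous equation ∑ aᵢxᵢ = 0 (meaning: every assignment of integer parameters gives a solution, and every integer solution arises from some integer parameters), then for each column j, gcd(c_{1j}, ..., c_{nj}) = 1. -/
open Matrix Finset

lemma aux_inj (m : ℕ) (a : Fin (m+1) → ℤ) (ha : ∀ i, a i ≠ 0)
    (C : Matrix (Fin (m+1)) (Fin m) ℤ)
    (hgen : ∀ x : Fin (m+1) → ℤ, ∑ i, a i * x i = 0 → ∃ k, x = C.mulVec k) :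
    Function.Injective C.mulVec := by
  classical
  -- the special solutions
  set v : Fin m → (Fin (m+1) → ℤ) := fun j i =>
    a (Fin.last m) * (Pi.single (j.castSucc) (1:ℤ) : Fin (m+1) → ℤ) i
      - a j.castSucc * (Pi.single (Fin.last m) (1:ℤ) : Fin (m+1) → ℤ) i
    with hv_def
  have hv : ∀ j, ∑ i, a i * v j i = 0 := by
    intro j
    simp only [hv_def, mul_sub, Finset.sum_sub_distrib, Pi.single_apply, mul_ite, mul_one, mul_zero,
      Finset.sum_ite_eq', Finset.mem_univ, if_true]
    ring
  choose k hk using fun j => hgen (v j) (hv j)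
  set K : Matrix (Fin m) (Fin m) ℤ := Matrix.of fun x j => k j x with hK_def
  set V : Matrix (Fin (m+1)) (Fin m) ℤ := Matrix.of fun i j => v j i with hV_def
  have hCK : C * K = V := by
    ext i j
    rw [Matrix.mul_apply]
    have h := congrFun (hk j) i
    simp only [Matrix.mulVec, dotProduct] at h
    simpa [hV_def, hK_def] using h.symm
  -- move to ℚ
  set f := Int.castRingHom ℚ with hf
  set Cq := C.map f with hCq
  set Vq := V.map f with hVq
  have hVker : LinearMap.ker Vq.mulVecLin = ⊥ := by
    rw [Matrix.ker_mulVecLin_eq_bot_iff]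
    intro u hu
    funext j
    have h1 := congrFun hu j.castSucc
    simp only [Matrix.mulVec, dotProduct, hVq, hV_def, Matrix.map_apply, Matrix.of_apply,
      hv_def, Pi.zero_apply, hf, eq_intCast] at h1
    have h2 : ∀ x : Fin m, ((a (Fin.last m) * (Pi.single (x.castSucc) (1:ℤ) : Fin (m+1) → ℤ) j.castSucc -
        a x.castSucc * (Pi.single (Fin.last m) (1:ℤ) : Fin (m+1) → ℤ) j.castSucc : ℤ) : ℚ) * u x
        = (if x = j then (a (Fin.last m) : ℚ) * u x else 0) := by
      intro x
      rcases eq_or_ne x j with rfl | hxj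
      · simp [Pi.single_apply, (Fin.castSucc_lt_last x).ne]
      · simp [Pi.single_apply, Fin.castSucc_inj, (Fin.castSucc_lt_last j).ne, hxj]
    rw [Finset.sum_congr rfl (fun x _ => h2 x), Finset.sum_ite_eq' Finset.univ j] at h1
    simp only [Finset.mem_univ, if_true] at h1
    rcases mul_eq_zero.mp h1 with h | h
    · exact absurd (by exact_mod_cast h) (ha (Fin.last m))
    · simpa using h
  have hVlin : Function.Injective Vq.mulVecLin := LinearMap.ker_eq_bot.mp hVker
  have hrankV : Vq.rank = m := by
    rw [Matrix.rank, LinearMap.finrank_range_of_inj hVlin]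
    simp
  have hVqCK : Vq = Cq * K.map f := by
    rw [hVq, hCq, ← hCK, Matrix.map_mul]
  have hrankC : Cq.rank = m := by
    refine le_antisymm (by simpa using Cq.rank_le_card_width) ?_
    have h := Matrix.rank_mul_le_left Cq (K.map f)
    rw [← hVqCK, hrankV] at h
    exact h
  have hCqker : LinearMap.ker Cq.mulVecLin = ⊥ := by
    have hrn := LinearMap.finrank_range_add_finrank_ker Cq.mulVecLin
    rw [← Matrix.rank, hrankC] at hrn
    simp only [Module.finrank_pi, Fintype.card_fin] at hrn
    have h0 : Module.finrank ℚ (LinearMap.ker Cq.mulVecLin) = 0 := by omega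
    exact Submodule.finrank_eq_zero.mp h0
  have hCqinj : Function.Injective Cq.mulVec := by
    have hinj' : Function.Injective Cq.mulVecLin := LinearMap.ker_eq_bot.mp hCqker
    intro x y hxy
    exact hinj' (by simpa [Matrix.mulVecLin_apply] using hxy)
  -- descend to ℤ
  intro u w huw
  have hq : Cq.mulVec (fun x => f (u x)) = Cq.mulVec (fun x => f (w x)) := by
    funext i
    have h1 := (RingHom.map_mulVec f C u i).symm
    have h2 := (RingHom.map_mulVec f C w i).symm
    simp only [Function.comp_def] at h1 h2
    rw [← hCq] at h1 h2
    rw [h1, h2, huw]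
  have h3 := hCqinj hq
  funext x
  have h4 : ((u x : ℚ)) = ((w x : ℚ)) := congrFun h3 x
  exact_mod_cast h4

theorem stmt_6 (n : ℕ) (a : Fin n → ℤ) (ha : ∀ i, a i ≠ 0)
    (C : Matrix (Fin n) (Fin (n - 1)) ℤ)
    (hsol : ∀ k : Fin (n - 1) → ℤ, ∑ i, a i * (C.mulVec k) i = 0)
    (hgen : ∀ x : Fin n → ℤ, ∑ i, a i * x i = 0 → ∃ k, x = C.mulVec k) :
    ∀ j, Finset.univ.gcd (fun i => C i j) = 1 := by
  intro j
  obtain ⟨m, rfl⟩ : ∃ m, n = m + 1 := ⟨n - 1, by have := j.isLt; omega⟩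
  have hinj : Function.Injective C.mulVec := aux_inj m a ha C hgen
  set g : ℤ := Finset.univ.gcd (fun i => C i j) with hg_def
  have hgd : ∀ i, g ∣ C i j := fun i => Finset.gcd_dvd (Finset.mem_univ i)
  have hcol : C.mulVec (Pi.single j 1) = fun i => C i j := by
    funext i
    simp [Matrix.mulVec, dotProduct, Pi.single_apply, mul_ite, Finset.sum_ite_eq']
  have hnn : 0 ≤ g := by
    have h := Finset.normalize_gcd (s := (Finset.univ : Finset (Fin (m+1))))
      (f := fun i => C i j)
    rw [← Int.abs_eq_normalize, ← hg_def] at h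
    rw [← h]
    exact abs_nonneg _
  by_cases hg0 : g = 0
  · exfalso
    have hz : ∀ i, C i j = 0 := fun i => Finset.gcd_eq_zero_iff.mp hg0 i (Finset.mem_univ i)
    have hC0 : C.mulVec (Pi.single j 1) = C.mulVec 0 := by
      rw [hcol, Matrix.mulVec_zero]; funext i; exact hz i
    have h1 := congrFun (hinj hC0) j
    simp at h1
  · set y : Fin (m+1) → ℤ := fun i => C i j / g with hy_def
    have hy : ∀ i, C i j = g * y i := fun i => (Int.mul_ediv_cancel' (hgd i)).symm
    have hsum : ∑ i, a i * y i = 0 := by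
      have h0 := hsol (Pi.single j 1)
      rw [hcol] at h0
      have h1 : ∑ i, a i * C i j = g * ∑ i, a i * y i := by
        rw [Finset.mul_sum]
        exact Finset.sum_congr rfl fun i _ => by rw [hy i]; ring
      rw [h1] at h0
      exact (mul_eq_zero.mp h0).resolve_left hg0
    obtain ⟨k, hk⟩ := hgen y hsum
    have hC : C.mulVec (Pi.single j 1) = C.mulVec (g • k) := by
      rw [Matrix.mulVec_smul, hcol, ← hk]
      funext i
      simp [hy i]
    have h1 := congrFun (hinj hC) j
    simp only [Pi.single_apply, if_pos rfl, Pi.smul_apply, smul_eq_mul] at h1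
    have hdvd : g ∣ 1 := ⟨k j, h1⟩
    rcases Int.isUnit_iff.mp (isUnit_of_dvd_one hdvd) with h | h
    · exact h
    · omega
end

section
/- Let ∑_{i=1}^n aᵢxᵢ = 0 with all aᵢ ≠ 0 and gcd(a₁, ..., aₙ) = 1, and let x_i = ∑_{j=1}^{n-1} c_{ij}k_j be a general integer solution. Then for every row index i, gcd(c_{i1}, ..., c_{i,n-1}) = gcd(a₁, ..., a_{i-1}, a_{i+1}, ..., aₙ) up to sign (they are associates). -/
/-!
Write `g` for the gcd of the coefficients other than `aᵢ`. Since `gcd(aᵢ, g) = 1`, the relation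
`aᵢ xᵢ = -∑_{j ≠ i} aⱼ xⱼ` forces `g ∣ xᵢ` for every solution; applied to the columns of `C`
(the solutions `C eⱼ`) this gives `g ∣ gcd_j c_{ij}`. Conversely, Bézout writes
`g = ∑_{j ≠ i} aⱼ uⱼ`, so `xᵢ = g`, `xⱼ = -aᵢ uⱼ` is a solution; it is of the form `C k`, hence its
`i`-th coordinate `g` is divisible by the gcd of the `i`-th row of `C`.
-/

open Finset Matrix

variable {R ι : Type*} [CommRing R] [NormalizedGCDMonoid R]

theorem Finset.gcd_erase_dvd_of_sum_mul_eq_zero [DecidableEq ι] {s : Finset ι} {i : ι}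
    (hi : i ∈ s) {a x : ι → R} (hgcd : s.gcd a = 1) (hx : ∑ j ∈ s, a j * x j = 0) :
    (s.erase i).gcd a ∣ x i := by
  set g := (s.erase i).gcd a
  have hcoprime : GCDMonoid.gcd (a i) g = 1 := by rw [← gcd_insert, insert_erase hi, hgcd]
  have hrest : g ∣ ∑ j ∈ s.erase i, a j * x j :=
    dvd_sum fun j hj => (gcd_dvd hj).mul_right _
  have hai : g ∣ a i * x i := by
    rw [eq_neg_of_add_eq_zero_left ((add_sum_erase s _ hi).trans hx)]
    exact hrest.neg_right
  -- `g ∣ gcd (aᵢ xᵢ) (g xᵢ)`, which is associated to `gcd aᵢ g * xᵢ = xᵢ`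
  have := (GCDMonoid.dvd_gcd hai (dvd_mul_right g (x i))).trans
    (_root_.gcd_mul_right' (x i) (a i) g).dvd
  rwa [hcoprime, one_mul] at this

theorem Finset.exists_sum_mul_eq_zero_apply_eq_gcd_erase [IsBezout R] [DecidableEq ι]
    {s : Finset ι} {i : ι} (hi : i ∈ s) (a : ι → R) :
    ∃ x : ι → R, ∑ j ∈ s, a j * x j = 0 ∧ x i = (s.erase i).gcd a := by
  obtain ⟨u, hu⟩ := (s.erase i).gcd_eq_sum_mul a
  refine ⟨Function.update (fun j => -(a i * u j)) i ((s.erase i).gcd a), ?_, by simp⟩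
  rw [← add_sum_erase s _ hi, Function.update_self,
    sum_congr rfl fun j hj => by rw [Function.update_of_ne (ne_of_mem_erase hj)], hu]
  simp only [mul_sum, mul_neg, sum_neg_distrib]
  exact add_neg_eq_zero.mpr (sum_congr rfl fun j _ => by ring)

theorem Matrix.gcd_row_dvd_mulVec {m : Type*} [Fintype ι] (C : Matrix m ι R) (i : m)
    (k : ι → R) : univ.gcd (C i) ∣ (C *ᵥ k) i :=
  dvd_sum fun l _ => (gcd_dvd (mem_univ l)).mul_right _

theorem stmt_7_general (n : ℕ) (a : Fin n → ℤ)
    (hgcd : Finset.univ.gcd a = 1)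
    (C : Matrix (Fin n) (Fin (n - 1)) ℤ)
    (hsol : ∀ k : Fin (n - 1) → ℤ, ∑ i, a i * (C.mulVec k) i = 0)
    (hgen : ∀ x : Fin n → ℤ, ∑ i, a i * x i = 0 → ∃ k, x = C.mulVec k) :
    ∀ i, Associated (Finset.univ.gcd (fun j => C i j))
      ((Finset.univ.erase i).gcd a) := by
  intro i
  refine associated_of_dvd_dvd ?_ (Finset.dvd_gcd fun j _ => ?_)
  · obtain ⟨x, hx, hxi⟩ := exists_sum_mul_eq_zero_apply_eq_gcd_erase (mem_univ i) a
    obtain ⟨k, rfl⟩ := hgen x hx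
    exact hxi ▸ C.gcd_row_dvd_mulVec i k
  · simpa [mulVec_single_one] using
      gcd_erase_dvd_of_sum_mul_eq_zero (mem_univ i) hgcd (hsol (Pi.single j 1))

theorem stmt_7 (n : ℕ) (a : Fin n → ℤ) (ha : ∀ i, a i ≠ 0)
    (hgcd : Finset.univ.gcd a = 1)
    (C : Matrix (Fin n) (Fin (n - 1)) ℤ)
    (hsol : ∀ k : Fin (n - 1) → ℤ, ∑ i, a i * (C.mulVec k) i = 0)
    (hgen : ∀ x : Fin n → ℤ, ∑ i, a i * x i = 0 → ∃ k, x = C.mulVec k) :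
    ∀ i, Associated (Finset.univ.gcd (fun j => C i j))
      ((Finset.univ.erase i).gcd a) :=
  stmt_7_general n a hgcd C hsol hgen
end

section
/- Let a₁, ..., aₙ ∈ ℤ \ {0} with gcd(a₁, ..., aₙ) = 1 and all |aᵢ| ≠ 1. Let r achieve the minimum of {|r'| : r' ≡ aᵢ (mod aⱼ), 0 < |r'| < |aⱼ|} over all pairs (i, j). Then |r| < |aᵢ| for every i. -/
/-! As `aᵢ` is not a unit and the coefficients have gcd `1`, some `aₖ` is not divisible by `aᵢ`;
then `aₖ % aᵢ` is a nonzero remainder modulo `aᵢ` of absolute value below `|aᵢ|`, and by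
minimality `|r|` is at most that remainder. -/

theorem Finset.exists_not_dvd_of_gcd_eq_one {ι α : Type*} [CommMonoidWithZero α]
    [NormalizedGCDMonoid α] {s : Finset ι} {f : ι → α} (hs : s.gcd f = 1) {x : α}
    (hx : ¬IsUnit x) : ∃ k ∈ s, ¬x ∣ f k := by
  by_contra! hdvd
  exact hx (isUnit_of_dvd_one (hs ▸ Finset.dvd_gcd hdvd))

theorem stmt_12_general (n : ℕ) (a : Fin n → ℤ) (ha : ∀ i, a i ≠ 0)
    (hgcd : Finset.univ.gcd a = 1) (habs : ∀ i, |a i| ≠ 1) (r : ℤ)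
    (hmin : ∀ (r' : ℤ) (i j : Fin n),
      a j ∣ (a i - r') → 0 < |r'| → |r'| < |a j| → |r| ≤ |r'|) :
    ∀ i, |r| < |a i| := by
  intro i
  obtain ⟨k, -, hk⟩ :=
    Finset.exists_not_dvd_of_gcd_eq_one hgcd (mt Int.isUnit_iff_abs_eq.mp (habs i))
  have hpos : 0 < a k % a i := (Int.emod_pos_of_not_dvd hk).resolve_left (ha i)
  have hlt : a k % a i < |a i| := Int.emod_lt_abs _ (ha i)
  rw [← abs_of_pos hpos] at hlt
  exact (hmin _ k i (Int.dvd_self_sub_of_emod_eq rfl) (abs_pos.mpr hpos.ne') hlt).trans_lt hlt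

theorem stmt_12 (n : ℕ) (a : Fin n → ℤ) (ha : ∀ i, a i ≠ 0)
    (hgcd : Finset.univ.gcd a = 1) (habs : ∀ i, |a i| ≠ 1) (r : ℤ)
    (hmem : ∃ i j : Fin n, a j ∣ (a i - r) ∧ 0 < |r| ∧ |r| < |a j|)
    (hmin : ∀ (r' : ℤ) (i j : Fin n),
      a j ∣ (a i - r') → 0 < |r'| → |r'| < |a j| → |r| ≤ |r'|) :
    ∀ i, |r| < |a i| :=
  stmt_12_general n a ha hgcd habs r hmin
end
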